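/- For γ > 1 and any λ > 0 and β > 0, the following Aizenman–Lieb-type identity holds: γ(γ−1) ∫₀^λ (λ−τ)^{γ−2} L_{1,0}(β/√τ) τ dτ = L_{γ,0}(β/√λ) λ^γ, where L_{γ,0}(b) = (8/π)(γ)∫₀¹ x(1−x²)^{γ−1} arctan(x/b) dx − 1. -/

import Mathlib

/-!
Rescaling `x = y / √τ` gives `L_{1,0}(β/√τ) τ = P τ` with
`P τ = (8/π) ∫₀^{√τ} y arctan(y/β) dy - τ`, so that `P 0 = 0` and
`P' τ = (4/π) arctan(√τ/β) - 1`. One integration by parts moves the derivative from the kernel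
`(λ-τ)^{γ-2}` onto `P`, the boundary terms vanishing since `γ > 1` and `P 0 = 0`; the
substitution `τ = λ x²` then turns `γ ∫₀^λ (λ-τ)^{γ-1} P' τ dτ` into the integral
defining `L_{γ,0}(β/√λ) λ^γ`.
-/

open Real intervalIntegral

/-- The coefficient L_{γ,0}(b) (with L^sc_{γ,0} = 1). -/
noncomputable def Lz (γ b : ℝ) : ℝ :=
  (8 / Real.pi) * γ
      * (∫ x in (0:ℝ)..1, x * (1 - x ^ 2) ^ (γ - 1) * Real.arctan (x / b)) - 1

open Set

theorem continuous_sub_rpow {lam p : ℝ} (hp : 0 ≤ p) :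
    Continuous fun τ : ℝ => (lam - τ) ^ p :=
  (continuous_const.sub continuous_id).rpow_const fun _ => Or.inr hp

theorem integral_sub_rpow (lam : ℝ) {p : ℝ} (hp : -1 < p) :
    ∫ τ in (0:ℝ)..lam, (lam - τ) ^ p = lam ^ (p + 1) / (p + 1) := by
  rw [integral_comp_sub_left (fun x : ℝ => x ^ p), sub_self, sub_zero, integral_rpow (Or.inl hp),
    zero_rpow (by linarith), sub_zero]

theorem mul_integral_sub_rpow_mul_eq_integral_sub_rpow_mul_deriv {P Q : ℝ → ℝ} {lam α : ℝ}
    (hlam : 0 ≤ lam) (hα : 0 < α) (hP : ContinuousOn P (Icc 0 lam))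
    (hPQ : ∀ τ ∈ Ioo 0 lam, HasDerivAt P (Q τ) τ) 
    (hQ : IntervalIntegrable Q MeasureTheory.volume 0 lam)
    (hP0 : P 0 = 0) :
    α * ∫ τ in (0:ℝ)..lam, (lam - τ) ^ (α - 1) * P τ
      = ∫ τ in (0:ℝ)..lam, (lam - τ) ^ α * Q τ := by
  have hkernel : ∀ τ ∈ Ioo 0 lam,
      HasDerivAt (fun τ => (lam - τ) ^ α) (-(α * (lam - τ) ^ (α - 1))) τ := by
    intro τ hτ
    simpa using ((hasDerivAt_id τ).const_sub lam).rpow_const (p := α)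
      (Or.inl (sub_pos.2 hτ.2).ne')
  have hkernel_int :
      IntervalIntegrable (fun τ => -(α * (lam - τ) ^ (α - 1))) MeasureTheory.volume 0 lam := by
    have := (IntervalIntegrable.comp_sub_left
      (intervalIntegrable_rpow' (a := 0) (b := lam) (r := α - 1) (by linarith)) lam).symm
    simp only [sub_self, sub_zero] at this
    exact (this.const_mul α).neg
  have := integral_mul_deriv_eq_deriv_mul_of_hasDerivAt
    (continuous_sub_rpow hα.le).continuousOn (by rwa [uIcc_of_le hlam])
    (by rwa [min_eq_left hlam, max_eq_right hlam]) (by rwa [min_eq_left hlam, max_eq_right hlam])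
    hkernel_int hQ
  rw [this, sub_self, zero_rpow hα.ne', hP0]
  simp [integral_neg, integral_const_mul, mul_assoc]

theorem sq_mul_integral_mul_comp_mul (f : ℝ → ℝ) (s : ℝ) :
    s ^ 2 * ∫ x in (0:ℝ)..1, x * f (x * s) = ∫ y in (0:ℝ)..s, y * f y := by
  rcases eq_or_ne s 0 with rfl | hs
  · simp
  have h := integral_comp_mul_right (a := 0) (b := 1) (fun y => y * f y) hs
  rw [zero_mul, one_mul, smul_eq_mul] at h
  calc s ^ 2 * ∫ x in (0:ℝ)..1, x * f (x * s)
      = s * ∫ x in (0:ℝ)..1, x * s * f (x * s) := by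
        rw [← integral_const_mul, ← integral_const_mul]; congr 1; ext x; ring
    _ = ∫ y in (0:ℝ)..s, y * f y := by rw [h, ← mul_assoc, mul_inv_cancel₀ hs, one_mul]

theorem hasDerivAt_integral_mul_sqrt {f : ℝ → ℝ} (hf : Continuous f) {τ : ℝ}
    (hτ : 0 < τ) :
    HasDerivAt (fun t => ∫ y in (0:ℝ)..√t, y * f y) (f √τ / 2) τ := by
  have hint : Continuous fun y => y * f y := continuous_id.mul hf
  refine ((hint.integral_hasStrictDerivAt 0 √τ).hasDerivAt.comp τ
    (hasDerivAt_sqrt hτ.ne')).congr_deriv ?_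
  field_simp

theorem integral_sub_rpow_mul_comp_sqrt {g : ℝ → ℝ} (hg : Continuous g) {lam p : ℝ}
    (hlam : 0 < lam) (hp : 0 ≤ p) :
    ∫ τ in (0:ℝ)..lam, (lam - τ) ^ p * g √τ
      = 2 * lam ^ (p + 1) * ∫ x in (0:ℝ)..1, x * (1 - x ^ 2) ^ p * g (x * √lam) := by
  have hsubst := integral_deriv_smul_comp (f := fun x : ℝ => lam * x ^ 2) (a := 0) (b := 1)
    (fun x _ => by simpa using (hasDerivAt_pow 2 x).const_mul lam)
    (by fun_prop : Continuous fun x : ℝ => lam * (2 * x)).continuousOn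
    ((continuous_sub_rpow hp).mul (hg.comp continuous_sqrt) :
      Continuous fun τ => (lam - τ) ^ p * g √τ)
  simp only [Function.comp, Pi.mul_apply, smul_eq_mul] at hsubst
  rw [zero_pow two_ne_zero, mul_zero, one_pow, mul_one] at hsubst
  rw [← hsubst, ← integral_const_mul]
  refine integral_congr fun x hx => ?_
  rw [uIcc_of_le zero_le_one] at hx
  have hlam_p : lam ^ (p + 1) = lam * lam ^ p := by rw [rpow_add hlam, rpow_one, mul_comm]
  rw [sqrt_mul hlam.le, sqrt_sq hx.1, show lam - lam * x ^ 2 = lam * (1 - x ^ 2) by ring,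
    mul_rpow hlam.le (by nlinarith [hx.1, hx.2]), hlam_p]
  ring_nf

theorem Lz_one (b : ℝ) : Lz 1 b = 8 / π * (∫ x in (0:ℝ)..1, x * arctan (x / b)) - 1 := by
  simp only [Lz, sub_self, rpow_zero, mul_one]

theorem Lz_one_div_sqrt_mul (β : ℝ) {τ : ℝ} (hτ : 0 ≤ τ) :
    Lz 1 (β / √τ) * τ = 8 / π * (∫ y in (0:ℝ)..√τ, y * arctan (y / β)) - τ := by
  rw [Lz_one, ← sq_mul_integral_mul_comp_mul (fun y => arctan (y / β)), sq_sqrt hτ]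
  simp only [div_div_eq_mul_div]
  ring

theorem sub_one_mul_integral_Lz_one_by_parts (β : ℝ) {γ lam : ℝ} (hγ : 1 < γ)
    (hlam : 0 ≤ lam) :
    (γ - 1) * ∫ τ in (0:ℝ)..lam, (lam - τ) ^ (γ - 2) * Lz 1 (β / √τ) * τ
      = ∫ τ in (0:ℝ)..lam, (lam - τ) ^ (γ - 1) * (4 / π * arctan (√τ / β) - 1) := by
  set H : ℝ → ℝ := fun s => ∫ y in (0:ℝ)..s, y * arctan (y / β)
  have hA : Continuous fun y => arctan (y / β) := by fun_prop
  have hP : Continuous fun τ => 8 / π * H √τ - τ :=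
    ((continuous_primitive (fun a b => (continuous_id.mul hA).intervalIntegrable a b) 0).comp
      continuous_sqrt |>.const_mul _).sub continuous_id
  have hP' : ∀ τ ∈ Ioo 0 lam,
      HasDerivAt (fun τ => 8 / π * H √τ - τ) (4 / π * arctan (√τ / β) - 1) τ :=
    fun τ hτ => (((hasDerivAt_integral_mul_sqrt hA hτ.1).const_mul (8 / π)).sub
      (hasDerivAt_id τ)).congr_deriv (by ring)
  have hQ : Continuous fun τ => 4 / π * arctan (√τ / β) - 1 := by fun_prop
  rw [← mul_integral_sub_rpow_mul_eq_integral_sub_rpow_mul_deriv hlam (sub_pos.2 hγ)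
    hP.continuousOn hP' (hQ.intervalIntegrable _ _) (by simp [H]), sub_sub, one_add_one_eq_two]
  congr 1
  refine integral_congr fun τ hτ => ?_
  rw [uIcc_of_le hlam] at hτ
  rw [mul_assoc, Lz_one_div_sqrt_mul β hτ.1]

theorem mul_integral_sub_rpow_mul_arctan_sqrt_eq_Lz (β : ℝ) {γ lam : ℝ} (hγ : 1 < γ)
    (hlam : 0 < lam) :
    γ * ∫ τ in (0:ℝ)..lam, (lam - τ) ^ (γ - 1) * (4 / π * arctan (√τ / β) - 1)
      = Lz γ (β / √lam) * lam ^ γ := by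
  have hA : Continuous fun y => arctan (y / β) := by fun_prop
  have hkernel : Continuous fun τ => (lam - τ) ^ (γ - 1) := continuous_sub_rpow (by linarith)
  have hsplit : ∫ τ in (0:ℝ)..lam, (lam - τ) ^ (γ - 1) * (4 / π * arctan (√τ / β) - 1)
      = 4 / π * (∫ τ in (0:ℝ)..lam, (lam - τ) ^ (γ - 1) * arctan (√τ / β))
          - ∫ τ in (0:ℝ)..lam, (lam - τ) ^ (γ - 1) := by
    rw [← integral_const_mul, ← integral_sub]
    · simp only [mul_sub, mul_one, mul_left_comm]
    · exact ((hkernel.mul (hA.comp continuous_sqrt)).const_mul _).intervalIntegrable _ _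
    · exact hkernel.intervalIntegrable _ _
  rw [hsplit, integral_sub_rpow_mul_comp_sqrt hA hlam (by linarith), sub_add_cancel,
    integral_sub_rpow lam (by linarith), sub_add_cancel, Lz]
  simp only [div_div_eq_mul_div]
  generalize ∫ x in (0:ℝ)..1, x * (1 - x ^ 2) ^ (γ - 1) * arctan (x * √lam / β) = I
  field_simp
  ring

theorem aizenman_lieb_second_term
    (γ lam β : ℝ) (hγ : 1 < γ) (hlam : 0 < lam) :
    γ * (γ - 1)
        * ∫ τ in (0:ℝ)..lam, (lam - τ) ^ (γ - 2) * Lz 1 (β / Real.sqrt τ) * τ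
      = Lz γ (β / Real.sqrt lam) * lam ^ γ := by
  rw [mul_assoc, sub_one_mul_integral_Lz_one_by_parts β hγ hlam.le,
    mul_integral_sub_rpow_mul_arctan_sqrt_eq_Lz β hγ hlam]
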